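/- Let a : Fin n → ℝ and let f, g ∈ Rₙ with g nonzero. If a is a corner root of f, then a is a corner root of f * g. -/

import Mathlib

open MvPolynomial

abbrev 𝕋 : Type := Tropical (WithTop ℝ)

/-- The 𝕋-point determined by a real point. -/
noncomputable def tpt {n : ℕ} (a : Fin n → ℝ) : Fin n → 𝕋 :=
  fun i => Tropical.trop (a i : WithTop ℝ)

/-- The value at `a` of the `d`-monomial of `f`. -/
noncomputable def mval {n : ℕ} (f : MvPolynomial (Fin n) 𝕋) (d : Fin n →₀ ℕ)
    (a : Fin n → ℝ) : 𝕋 :=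
  f.coeff d * ∏ i, (tpt a i) ^ d i

/-- `a` is a corner root of `f` if at least two monomials of `f` attain the value of `f`
at `a`. -/
def IsCornerRoot {n : ℕ} (a : Fin n → ℝ) (f : MvPolynomial (Fin n) 𝕋) : Prop :=
  ∃ d₁ ∈ f.support, ∃ d₂ ∈ f.support, d₁ ≠ d₂ ∧
    mval f d₁ a = MvPolynomial.eval (tpt a) f ∧ mval f d₂ a = MvPolynomial.eval (tpt a) f

/- ### Auxiliary lemmas -/

lemma trop_sum_le {ι : Type*} (s : Finset ι) (F : ι → 𝕋) {i : ι} (hi : i ∈ s) :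
    (∑ j ∈ s, F j) ≤ F i := by
  rw [← Tropical.untrop_le_iff, Finset.untrop_sum']
  exact Finset.inf_le hi

lemma trop_le_sum {ι : Type*} (s : Finset ι) (F : ι → 𝕋) {c : 𝕋}
    (h : ∀ i ∈ s, c ≤ F i) : c ≤ ∑ j ∈ s, F j := by
  rw [← Tropical.untrop_le_iff, Finset.untrop_sum']
  exact Finset.le_inf fun i hi => Tropical.untrop_le_iff.2 (h i hi)

lemma trop_exists_eq_sum {ι : Type*} (s : Finset ι) (hs : s.Nonempty) (F : ι → 𝕋) :
    ∃ i ∈ s, F i = ∑ j ∈ s, F j := by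
  obtain ⟨i, hi, h⟩ := Finset.exists_mem_eq_inf s hs (Tropical.untrop ∘ F)
  refine ⟨i, hi, Tropical.untrop_injective ?_⟩
  rw [Finset.untrop_sum']; exact h.symm

lemma trop_mul_ne_zero {x y : 𝕋} (hx : x ≠ 0) (hy : y ≠ 0) : x * y ≠ 0 := by
  intro h
  have : Tropical.untrop (x * y) = (⊤ : WithTop ℝ) := by rw [h, Tropical.untrop_zero]
  rw [Tropical.untrop_mul, WithTop.add_eq_top] at this
  rcases this with h' | h'
  · exact hx (Tropical.untrop_injective (by rw [h', Tropical.untrop_zero]))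
  · exact hy (Tropical.untrop_injective (by rw [h', Tropical.untrop_zero]))

lemma trop_mul_le_mul {x y z w : 𝕋} (h1 : x ≤ y) (h2 : z ≤ w) : x * z ≤ y * w := by
  rw [← Tropical.untrop_le_iff, Tropical.untrop_mul, Tropical.untrop_mul]
  exact add_le_add (Tropical.untrop_le_iff.2 h1) (Tropical.untrop_le_iff.2 h2)

lemma trop_ne_zero_of_le {x y : 𝕋} (h : x ≤ y) (hy : y ≠ 0) : x ≠ 0 := by
  intro hx
  exact hy (le_antisymm (Tropical.le_zero y) (hx ▸ h))

lemma tpt_pow_ne_zero {n : ℕ} (a : Fin n → ℝ) (i : Fin n) (k : ℕ) :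
    (tpt a i) ^ k ≠ 0 := by
  induction k with
  | zero =>
    intro h
    have := congrArg Tropical.untrop h
    rw [pow_zero, Tropical.untrop_one, Tropical.untrop_zero] at this
    exact (WithTop.top_ne_coe (a := (0 : ℝ))) this.symm
  | succ k ih =>
    rw [pow_succ]
    refine trop_mul_ne_zero ih ?_
    intro h
    have := congrArg Tropical.untrop h
    rw [Tropical.untrop_zero] at this
    exact (WithTop.top_ne_coe (a := a i)) this.symm

lemma tpt_prod_ne_zero {n : ℕ} (a : Fin n → ℝ) (d : Fin n →₀ ℕ) :
    (∏ i, (tpt a i) ^ d i) ≠ 0 := by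
  refine Finset.prod_induction _ (· ≠ 0) (fun x y hx hy => trop_mul_ne_zero hx hy) ?_
    (fun i _ => tpt_pow_ne_zero a i (d i))
  intro h
  have := congrArg Tropical.untrop h
  rw [Tropical.untrop_one, Tropical.untrop_zero] at this
  exact (WithTop.top_ne_coe (a := (0 : ℝ))) this.symm

lemma eval_eq_sum_mval {n : ℕ} (a : Fin n → ℝ) (f : MvPolynomial (Fin n) 𝕋) :
    MvPolynomial.eval (tpt a) f = ∑ d ∈ f.support, mval f d a := by
  rw [MvPolynomial.eval_eq']
  rfl

lemma eval_le_mval {n : ℕ} (a : Fin n → ℝ) (f : MvPolynomial (Fin n) 𝕋) (d : Fin n →₀ ℕ) :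
    MvPolynomial.eval (tpt a) f ≤ mval f d a := by
  by_cases hd : d ∈ f.support
  · rw [eval_eq_sum_mval]
    exact trop_sum_le _ _ hd
  · have : mval f d a = 0 := by
      rw [mval, MvPolynomial.notMem_support_iff.1 hd, zero_mul]
    rw [this]
    exact Tropical.le_zero _

lemma exists_mval_eq_eval {n : ℕ} (a : Fin n → ℝ) (g : MvPolynomial (Fin n) 𝕋)
    (hg : g ≠ 0) : ∃ e ∈ g.support, mval g e a = MvPolynomial.eval (tpt a) g := by
  obtain ⟨e, he, h⟩ := trop_exists_eq_sum g.support
    (MvPolynomial.support_nonempty.2 hg) (fun d => mval g d a)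
  exact ⟨e, he, by rw [h, eval_eq_sum_mval]⟩

lemma mval_mul_mval {n : ℕ} (a : Fin n → ℝ) (f g : MvPolynomial (Fin n) 𝕋)
    (u v : Fin n →₀ ℕ) :
    mval f u a * mval g v a
      = (f.coeff u * g.coeff v) * ∏ i, (tpt a i) ^ (u + v) i := by
  simp only [mval, Finsupp.add_apply, pow_add, Finset.prod_mul_distrib]
  ring

lemma mval_ne_zero {n : ℕ} (a : Fin n → ℝ) (f : MvPolynomial (Fin n) 𝕋)
    {d : Fin n →₀ ℕ} (hd : d ∈ f.support) : mval f d a ≠ 0 :=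
  trop_mul_ne_zero (MvPolynomial.mem_support_iff.1 hd) (tpt_prod_ne_zero a d)

lemma key_lemma {n : ℕ} (a : Fin n → ℝ) (f g : MvPolynomial (Fin n) 𝕋)
    {d e : Fin n →₀ ℕ} (hd : d ∈ f.support) (he : e ∈ g.support)
    (hdv : mval f d a = MvPolynomial.eval (tpt a) f)
    (hev : mval g e a = MvPolynomial.eval (tpt a) g) :
    (d + e) ∈ (f * g).support ∧
      mval (f * g) (d + e) a = MvPolynomial.eval (tpt a) (f * g) := by
  have hde : (d, e) ∈ Finset.HasAntidiagonal.antidiagonal (d + e) := by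
    rw [Finset.HasAntidiagonal.mem_antidiagonal]
  have hsum : mval (f * g) (d + e) a
      = ∑ p ∈ Finset.HasAntidiagonal.antidiagonal (d + e), mval f p.1 a * mval g p.2 a := by
    rw [mval, MvPolynomial.coeff_mul, Finset.sum_mul]
    refine Finset.sum_congr rfl fun p hp => ?_
    rw [mval_mul_mval, Finset.HasAntidiagonal.mem_antidiagonal.1 hp]
  have hle : mval (f * g) (d + e) a ≤ mval f d a * mval g e a := by
    rw [hsum]
    exact trop_sum_le _ _ hde
  have hge : MvPolynomial.eval (tpt a) f * MvPolynomial.eval (tpt a) g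
      ≤ mval (f * g) (d + e) a := by
    rw [hsum]
    exact trop_le_sum _ _ fun p _ =>
      trop_mul_le_mul (eval_le_mval a f p.1) (eval_le_mval a g p.2)
  have heval : mval (f * g) (d + e) a = MvPolynomial.eval (tpt a) (f * g) := by
    rw [map_mul]
    refine le_antisymm ?_ hge
    rw [← hdv, ← hev]
    exact hle
  refine ⟨MvPolynomial.mem_support_iff.2 ?_, heval⟩
  intro hc
  have h0 : mval (f * g) (d + e) a = 0 := by rw [mval, hc, zero_mul]
  have hne : mval f d a * mval g e a ≠ 0 :=
    trop_mul_ne_zero (mval_ne_zero a f hd) (mval_ne_zero a g he)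
  exact (trop_ne_zero_of_le hle hne) h0

/-- If `a` is a corner root of `f`, then `a` is a corner root of `f * g` for any
nonzero `g`. -/
theorem stmt4 {n : ℕ} (a : Fin n → ℝ) (f g : MvPolynomial (Fin n) 𝕋)
    (hg0 : g ≠ 0) (hf : IsCornerRoot a f) : IsCornerRoot a (f * g) := by
  obtain ⟨d₁, hd₁, d₂, hd₂, hne, hv₁, hv₂⟩ := hf
  obtain ⟨e, he, hev⟩ := exists_mval_eq_eval a g hg0
  obtain ⟨hs₁, hm₁⟩ := key_lemma a f g hd₁ he hv₁ hev
  obtain ⟨hs₂, hm₂⟩ := key_lemma a f g hd₂ he hv₂ hev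
  exact ⟨d₁ + e, hs₁, d₂ + e, hs₂, fun h => hne (by
    have := congrArg (· - e) h
    simpa using add_right_cancel h), hm₁, hm₂⟩
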